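/- Digamma identity for the Beta environment: with ω ~ Beta(α, β), ρ = (1−ω)/ω, and κ = α − β ∈ (0,1), one has E[ρ^κ log ρ] = ψ(α) − ψ(β), where ψ = Γ'/Γ is the digamma function. -/

import Mathlib

open MeasureTheory Real Set

/-- The Beta function as an integral. -/
noncomputable def betaFn (a b : ℝ) : ℝ :=
  ∫ x in Set.Ioo (0 : ℝ) 1, x ^ (a - 1) * (1 - x) ^ (b - 1)

/-- The digamma function `ψ = (log Γ)'`. -/
noncomputable def digammaFn (z : ℝ) : ℝ :=
  deriv (fun y : ℝ => Real.log (Real.Gamma y)) z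

lemma beta_integrable {a b : ℝ} (ha : 0 < a) (hb : 0 < b) :
    IntegrableOn (fun x : ℝ => x ^ (a - 1) * (1 - x) ^ (b - 1)) (Ioo 0 1) := by
  have h := (Complex.betaIntegral_convergent (u := (a : ℂ)) (v := (b : ℂ))
    (by simpa using ha) (by simpa using hb)).norm
  rw [intervalIntegrable_iff_integrableOn_Ioo_of_le zero_le_one] at h
  refine h.congr_fun (fun x hx => ?_) measurableSet_Ioo
  obtain ⟨hx0, hx1⟩ := hx
  have h1 : ((1:ℂ) - (x:ℂ)) = ((1 - x : ℝ) : ℂ) := by push_cast; ring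
  have h2 : ((a:ℂ) - 1) = ((a - 1 : ℝ) : ℂ) := by push_cast; ring
  have h3 : ((b:ℂ) - 1) = ((b - 1 : ℝ) : ℂ) := by push_cast; ring
  beta_reduce
  rw [norm_mul, h1, h2, h3,
    Complex.norm_cpow_eq_rpow_re_of_pos hx0, Complex.norm_cpow_eq_rpow_re_of_pos (by linarith)]
  norm_num

lemma betaFn_eq {a b : ℝ} (ha : 0 < a) (hb : 0 < b) :
    (∫ x in Ioo (0:ℝ) 1, x ^ (a - 1) * (1 - x) ^ (b - 1)) =
      Real.Gamma a * Real.Gamma b / Real.Gamma (a + b) := by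
  have key : Complex.Gamma a * Complex.Gamma b =
      Complex.Gamma (a + b) * Complex.betaIntegral a b :=
    Complex.Gamma_mul_Gamma_eq_betaIntegral (by simpa using ha) (by simpa using hb)
  have hcast : Complex.betaIntegral a b =
      ((∫ x in Ioo (0:ℝ) 1, x ^ (a - 1) * (1 - x) ^ (b - 1) : ℝ) : ℂ) := by
    rw [Complex.betaIntegral, intervalIntegral.integral_of_le zero_le_one,
      ← MeasureTheory.integral_Ioc_eq_integral_Ioo]
    have heq : (∫ x in Ioc (0:ℝ) 1, (x : ℂ) ^ ((a:ℂ) - 1) * (1 - (x:ℂ)) ^ ((b:ℂ) - 1)) =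
        ∫ x in Ioc (0:ℝ) 1, ((x ^ (a - 1) * (1 - x) ^ (b - 1) : ℝ) : ℂ) := by
      refine setIntegral_congr_fun measurableSet_Ioc (fun x hx => ?_)
      obtain ⟨hx0, hx1⟩ := hx
      have h1 : ((1:ℂ) - (x:ℂ)) = ((1 - x : ℝ) : ℂ) := by push_cast; ring
      have h2 : ((a:ℂ) - 1) = ((a - 1 : ℝ) : ℂ) := by push_cast; ring
      have h3 : ((b:ℂ) - 1) = ((b - 1 : ℝ) : ℂ) := by push_cast; ring
      rw [h1, h2, h3, ← Complex.ofReal_cpow hx0.le, ← Complex.ofReal_cpow (by linarith),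
        ← Complex.ofReal_mul]
    rw [heq]
    exact _root_.integral_ofReal
  have hG : Real.Gamma (a + b) ≠ 0 := (Real.Gamma_pos_of_pos (by linarith)).ne'
  rw [hcast] at key
  rw [Complex.Gamma_ofReal, Complex.Gamma_ofReal, ← Complex.ofReal_add, Complex.Gamma_ofReal,
    ← Complex.ofReal_mul, ← Complex.ofReal_mul, Complex.ofReal_inj] at key
  field_simp
  linarith [key]

lemma beta_aesm (c d : ℝ) :
    AEStronglyMeasurable (fun x : ℝ => x ^ c * (1 - x) ^ d)
      (volume.restrict (Ioo (0:ℝ) 1)) := by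
  refine (ContinuousOn.mul ?_ ?_).aestronglyMeasurable measurableSet_Ioo
  · exact fun x hx => (Real.continuousAt_rpow_const x c (Or.inl hx.1.ne')).continuousWithinAt
  · intro x hx
    exact (((Real.continuousAt_rpow_const (1-x) d (Or.inl (by linarith [hx.2] : (1:ℝ) - x ≠ 0))).comp
      ((continuous_const.sub continuous_id).continuousAt))).continuousWithinAt

lemma main_deriv (α β : ℝ) (hβ : 0 < β) (hαβ : β < α) (hαβ1 : α < β + 1) :
    (∫ x in Ioo (0:ℝ) 1, x ^ (β - 1) * (1 - x) ^ (α - 1) * (Real.log (1-x) - Real.log x)) =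
      (Real.Gamma β * deriv Real.Gamma α - deriv Real.Gamma β * Real.Gamma α) /
        Real.Gamma (α + β) := by
  set κ := α - β with hκ
  have hκ0 : 0 < κ := by simp [hκ]; linarith
  have hκ1 : κ < 1 := by simp [hκ]; linarith
  set F : ℝ → ℝ → ℝ := fun t x => x ^ (α - t - 1) * (1 - x) ^ (β + t - 1) with hF
  set F' : ℝ → ℝ → ℝ :=
    fun t x => x ^ (α - t - 1) * (1 - x) ^ (β + t - 1) * (Real.log (1-x) - Real.log x) with hF'
  set bound : ℝ → ℝ := fun x => (8/β) * (x ^ (β/4 - 1) * (1 - x) ^ (β/4 + κ - 1)) with hbound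
  have hε : (0:ℝ) < β/2 := by linarith
  have key := hasDerivAt_integral_of_dominated_loc_of_deriv_le (μ := volume.restrict (Ioo (0:ℝ) 1))
    (F := F) (F' := F') (x₀ := κ) (bound := bound) (Metric.ball_mem_nhds κ hε)
    (Filter.Eventually.of_forall (fun t => beta_aesm _ _))
    (by
      have := beta_integrable (a := β) (b := α) hβ (by linarith)
      refine this.congr_fun (fun x hx => ?_) measurableSet_Ioo
      simp only [hF]
      congr 1 <;> congr 1 <;> ring)
    (by
      refine ((beta_aesm (α - κ - 1) (β + κ - 1)).mul ?_)
      refine (ContinuousOn.sub ?_ ?_).aestronglyMeasurable measurableSet_Ioo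
      · exact fun x hx => (Real.continuousAt_log (by linarith [hx.2] : (1:ℝ) - x ≠ 0)).comp
          ((continuous_const.sub continuous_id).continuousAt) |>.continuousWithinAt
      · exact fun x hx => (Real.continuousAt_log hx.1.ne').continuousWithinAt)
    (by
      rw [ae_restrict_iff' measurableSet_Ioo]
      refine Filter.Eventually.of_forall (fun x hx t ht => ?_)
      obtain ⟨hx0, hx1⟩ := hx
      have hx1' : (0:ℝ) < 1 - x := by linarith
      rw [Metric.mem_ball, Real.dist_eq, abs_lt] at ht
      have hxle : x ≤ 1 := hx1.le
      have h1xle : 1 - x ≤ 1 := by linarith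
      -- |log(1-x) - log x| ≤ -log x - log(1-x)
      have hlx : Real.log x ≤ 0 := Real.log_nonpos hx0.le hxle
      have hl1x : Real.log (1-x) ≤ 0 := Real.log_nonpos hx1'.le h1xle
      have habs : |Real.log (1-x) - Real.log x| ≤ -Real.log x - Real.log (1-x) := by
        rw [abs_le]; constructor <;> nlinarith
      -- -log x ≤ (4/β) x^(-(β/4))
      have hlog : ∀ y : ℝ, 0 < y → -Real.log y ≤ (4/β) * y ^ (-(β/4)) := by
        intro y hy
        have h1 := Real.log_le_sub_one_of_pos (Real.rpow_pos_of_pos hy (-(β/4)))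
        rw [Real.log_rpow hy] at h1
        have h2 : (0:ℝ) < y ^ (-(β/4)) := Real.rpow_pos_of_pos hy _
        have h3 : -(β/4) * Real.log y ≤ y ^ (-(β/4)) := by linarith
        have h4 := mul_le_mul_of_nonneg_left h3 (by positivity : (0:ℝ) ≤ 4/β)
        calc -Real.log y = (4/β) * (-(β/4) * Real.log y) := by field_simp
          _ ≤ _ := h4
      have hpow : ∀ c c' : ℝ, c' ≤ c → x ^ c ≤ x ^ c' :=
        fun c c' h => Real.rpow_le_rpow_of_exponent_ge hx0 hxle h
      have hpow' : ∀ c c' : ℝ, c' ≤ c → (1-x) ^ c ≤ (1-x) ^ c' :=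
        fun c c' h => Real.rpow_le_rpow_of_exponent_ge hx1' h1xle h
      have hnn : ∀ (y c : ℝ), 0 < y → (0:ℝ) ≤ y ^ c := fun y c hy => (Real.rpow_pos_of_pos hy c).le
      have e1 : x ^ (α - t - 1) * x ^ (-(β/4)) = x ^ (α - t - 1 + -(β/4)) :=
        (Real.rpow_add hx0 _ _).symm
      have e2 : (1-x) ^ (β + t - 1) * (1-x) ^ (-(β/4)) = (1-x) ^ (β + t - 1 + -(β/4)) :=
        (Real.rpow_add hx1' _ _).symm
      have hFnn : 0 ≤ x ^ (α - t - 1) * (1 - x) ^ (β + t - 1) :=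
        mul_nonneg (hnn _ _ hx0) (hnn _ _ hx1')
      calc ‖F' t x‖ = x ^ (α - t - 1) * (1 - x) ^ (β + t - 1) * |Real.log (1-x) - Real.log x| := by
            simp only [hF', norm_mul, Real.norm_eq_abs,
              abs_of_nonneg (hnn x _ hx0), abs_of_nonneg (hnn (1-x) _ hx1')]
        _ ≤ x ^ (α - t - 1) * (1 - x) ^ (β + t - 1) *
              ((4/β) * x ^ (-(β/4)) + (4/β) * (1-x) ^ (-(β/4))) := by
            refine mul_le_mul_of_nonneg_left (habs.trans ?_) hFnn
            have := hlog x hx0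
            have := hlog (1-x) hx1'
            linarith
        _ = (4/β) * (x ^ (α - t - 1 + -(β/4)) * (1-x) ^ (β + t - 1)
              + x ^ (α - t - 1) * (1-x) ^ (β + t - 1 + -(β/4))) := by
            rw [← e1, ← e2]; ring
        _ ≤ (4/β) * (x ^ (β/4 - 1) * (1-x) ^ (β/4 + κ - 1)
              + x ^ (β/4 - 1) * (1-x) ^ (β/4 + κ - 1)) := by
            have c1 : x ^ (α - t - 1 + -(β/4)) ≤ x ^ (β/4 - 1) := hpow _ _ (by simp [hκ] at ht ⊢; linarith [ht.1, ht.2])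
            have c2 : (1-x) ^ (β + t - 1) ≤ (1-x) ^ (β/4 + κ - 1) := hpow' _ _ (by simp [hκ] at ht ⊢; linarith [ht.1, ht.2])
            have c3 : x ^ (α - t - 1) ≤ x ^ (β/4 - 1) := hpow _ _ (by simp [hκ] at ht ⊢; linarith [ht.1, ht.2])
            have c4 : (1-x) ^ (β + t - 1 + -(β/4)) ≤ (1-x) ^ (β/4 + κ - 1) := hpow' _ _ (by simp [hκ] at ht ⊢; linarith [ht.1, ht.2])
            have h4β : (0:ℝ) ≤ 4/β := by positivity
            refine mul_le_mul_of_nonneg_left ?_ h4β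
            exact add_le_add (mul_le_mul c1 c2 (hnn _ _ hx1') (hnn _ _ hx0))
              (mul_le_mul c3 c4 (hnn _ _ hx1') (hnn _ _ hx0))
        _ = bound x := by simp only [hbound]; ring)
    ((beta_integrable (a := β/4) (b := β/4 + κ) (by linarith) (by linarith)).const_mul _)
    (by
      rw [ae_restrict_iff' measurableSet_Ioo]
      refine Filter.Eventually.of_forall (fun x hx t ht => ?_)
      obtain ⟨hx0, hx1⟩ := hx
      have hx1' : (0:ℝ) < 1 - x := by linarith
      have h1 : HasDerivAt (fun t : ℝ => (α - t - 1) * Real.log x) (-Real.log x) t := by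
        simpa using (((hasDerivAt_id t).const_sub α).sub_const 1).mul_const (Real.log x)
      have h2 : HasDerivAt (fun t : ℝ => (β + t - 1) * Real.log (1-x)) (Real.log (1-x)) t := by
        simpa using (((hasDerivAt_id t).const_add β).sub_const 1).mul_const (Real.log (1-x))
      have h := (h1.exp).mul (h2.exp)
      have he : ∀ s : ℝ, Real.exp ((α - s - 1) * Real.log x) * Real.exp ((β + s - 1) * Real.log (1-x))
          = F s x := by
        intro s
        rw [hF]
        simp only
        rw [Real.rpow_def_of_pos hx0, Real.rpow_def_of_pos hx1']
        ring_nf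
      have := h.congr_of_eventuallyEq (Filter.Eventually.of_forall (fun s => (he s).symm))
      convert this using 1
      show x ^ (α - t - 1) * (1 - x) ^ (β + t - 1) * (Real.log (1-x) - Real.log x) = _
      rw [Real.rpow_def_of_pos hx0, Real.rpow_def_of_pos hx1']
      ring)
  obtain ⟨hint, hderiv⟩ := key
  have hne : ∀ z : ℝ, 0 < z → ∀ m : ℕ, z ≠ -(m:ℝ) := by
    intro z hz m h
    rw [h] at hz
    have : (0:ℝ) ≤ (m:ℝ) := Nat.cast_nonneg m
    linarith
  have hdβ : HasDerivAt Real.Gamma (deriv Real.Gamma β) β :=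
    (Real.differentiableAt_Gamma (hne β hβ)).hasDerivAt
  have hdα : HasDerivAt Real.Gamma (deriv Real.Gamma α) α :=
    (Real.differentiableAt_Gamma (hne α (by linarith))).hasDerivAt
  have hαk : α - κ = β := by rw [hκ]; ring
  have hβk : β + κ = α := by rw [hκ]; ring
  have hinner1 : HasDerivAt (fun t : ℝ => α - t) (-1) κ := by
    simpa using (hasDerivAt_id κ).const_sub α
  have hinner2 : HasDerivAt (fun t : ℝ => β + t) (1:ℝ) κ := by
    simpa using (hasDerivAt_id κ).const_add β
  have hdβ' : HasDerivAt Real.Gamma (deriv Real.Gamma β) (α - κ) := by rw [hαk]; exact hdβ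
  have hdα' : HasDerivAt Real.Gamma (deriv Real.Gamma α) (β + κ) := by rw [hβk]; exact hdα
  have h1 := hdβ'.comp κ hinner1
  have h2 := hdα'.comp κ hinner2
  have hG : HasDerivAt (fun t => Real.Gamma (α - t) * Real.Gamma (β + t) / Real.Gamma (α + β))
      ((Real.Gamma β * deriv Real.Gamma α - deriv Real.Gamma β * Real.Gamma α) /
        Real.Gamma (α + β)) κ := by
    have h3 := (h1.mul h2).div_const (Real.Gamma (α + β))
    convert h3 using 2
    show _ = deriv Real.Gamma β * -1 * Real.Gamma (β + κ) +
      Real.Gamma (α - κ) * (deriv Real.Gamma α * 1)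
    rw [hαk, hβk]
    ring
    all_goals rfl
  have hEq : (fun t => ∫ x in Ioo (0:ℝ) 1, F t x) =ᶠ[nhds κ]
      (fun t => Real.Gamma (α - t) * Real.Gamma (β + t) / Real.Gamma (α + β)) := by
    filter_upwards [Metric.ball_mem_nhds κ hε] with t ht
    rw [Metric.mem_ball, Real.dist_eq, abs_lt] at ht
    have ht1 : 0 < α - t := by simp [hκ] at ht; linarith [ht.1, ht.2]
    have ht2 : 0 < β + t := by simp [hκ] at ht; linarith [ht.1, ht.2]
    have := betaFn_eq ht1 ht2
    rw [show α - t + (β + t) = α + β from by ring] at this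
    exact this
  have hderiv2 : HasDerivAt (fun t => ∫ x in Ioo (0:ℝ) 1, F t x)
      ((Real.Gamma β * deriv Real.Gamma α - deriv Real.Gamma β * Real.Gamma α) /
        Real.Gamma (α + β)) κ := hG.congr_of_eventuallyEq hEq
  have huniq := hderiv.unique hderiv2
  rw [← huniq]
  refine setIntegral_congr_fun measurableSet_Ioo (fun x hx => ?_)
  simp only [hF']
  rw [show α - κ - 1 = β - 1 from by rw [hκ]; ring, show β + κ - 1 = α - 1 from by rw [hκ]; ring]


lemma hne_nat {z : ℝ} (hz : 0 < z) : ∀ m : ℕ, z ≠ -(m:ℝ) := by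
  intro m h
  rw [h] at hz
  have : (0:ℝ) ≤ (m:ℝ) := Nat.cast_nonneg m
  linarith

lemma digamma_eq {z : ℝ} (hz : 0 < z) :
    digammaFn z = deriv Real.Gamma z / Real.Gamma z := by
  have hd : HasDerivAt (fun y => Real.log (Real.Gamma y))
      (deriv Real.Gamma z / Real.Gamma z) z :=
    ((Real.differentiableAt_Gamma (hne_nat hz)).hasDerivAt).log
      (Real.Gamma_pos_of_pos hz).ne'
  exact hd.deriv

/-- For a Beta(α,β) environment with `ρ = (1-ω)/ω` and `κ = α - β ∈ (0,1)`,
one has `E[ρ^κ log ρ] = ψ(α) - ψ(β)`. -/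
theorem stmt15 (α β : ℝ) (hβ : 0 < β) (hαβ : β < α) (hαβ1 : α < β + 1) :
    (∫ x in Set.Ioo (0 : ℝ) 1,
        ((1 - x) / x) ^ (α - β) * Real.log ((1 - x) / x) *
          (x ^ (α - 1) * (1 - x) ^ (β - 1) / betaFn α β)) =
      digammaFn α - digammaFn β := by
  have hα : 0 < α := by linarith
  have hB : betaFn α β = Real.Gamma α * Real.Gamma β / Real.Gamma (α + β) := by
    rw [betaFn]; exact betaFn_eq hα hβ
  have hGα : 0 < Real.Gamma α := Real.Gamma_pos_of_pos hα
  have hGβ : 0 < Real.Gamma β := Real.Gamma_pos_of_pos hβ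
  have hGαβ : 0 < Real.Gamma (α + β) := Real.Gamma_pos_of_pos (by linarith)
  have hcongr : (∫ x in Set.Ioo (0 : ℝ) 1,
        ((1 - x) / x) ^ (α - β) * Real.log ((1 - x) / x) *
          (x ^ (α - 1) * (1 - x) ^ (β - 1) / betaFn α β)) =
      ∫ x in Set.Ioo (0 : ℝ) 1,
        x ^ (β - 1) * (1 - x) ^ (α - 1) * (Real.log (1 - x) - Real.log x) / betaFn α β := by
    refine setIntegral_congr_fun measurableSet_Ioo (fun x hx => ?_)
    obtain ⟨hx0, hx1⟩ := hx
    have hx1' : (0:ℝ) < 1 - x := by linarith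
    have e1 : x ^ (α - 1) / x ^ (α - β) = x ^ (β - 1) := by
      rw [← Real.rpow_sub hx0, show α - 1 - (α - β) = β - 1 from by ring]
    have e2 : (1 - x) ^ (α - β) * (1 - x) ^ (β - 1) = (1 - x) ^ (α - 1) := by
      rw [← Real.rpow_add hx1', show α - β + (β - 1) = α - 1 from by ring]
    rw [Real.log_div hx1'.ne' hx0.ne', Real.div_rpow hx1'.le hx0.le]
    calc (1 - x) ^ (α - β) / x ^ (α - β) * (Real.log (1 - x) - Real.log x) *
          (x ^ (α - 1) * (1 - x) ^ (β - 1) / betaFn α β)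
        = ((1 - x) ^ (α - β) * (1 - x) ^ (β - 1)) * (x ^ (α - 1) / x ^ (α - β)) *
          (Real.log (1 - x) - Real.log x) / betaFn α β := by ring
      _ = x ^ (β - 1) * (1 - x) ^ (α - 1) * (Real.log (1 - x) - Real.log x) / betaFn α β := by
          rw [e1, e2]; ring
  rw [hcongr, integral_div, main_deriv α β hβ hαβ hαβ1, hB,
    digamma_eq hα, digamma_eq hβ]
  field_simp
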